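/- Let K ∈ ℕ and let u0 be a half-integral timed word which is small w.r.t. K. For every timed word u there exists a half-integral timed word w such that the concatenation u0w is small w.r.t. K and every K-acceptor reaches the same control state on reading u0u as on reading u0w from its initial configuration. -/

import Mathlib

open scoped NNReal Classical

namespace IRTA

/-- A timestamp is a finite sequence of non-negative reals. -/
abbrev Timestamp : Type := List ℝ≥0

/-- A timed word is a finite sequence of (delay, letter) pairs. -/
abbrev TimedWord (A : Type) : Type := List (ℝ≥0 × A)

/-- Fractional part of a non-negative real. -/
noncomputable def fracPart (x : ℝ≥0) : ℝ≥0 := x - (⌊x⌋₊ : ℝ≥0)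

/-- `x` is a natural-number value. -/
def IsNatVal (x : ℝ≥0) : Prop := ∃ m : ℕ, x = (m : ℝ≥0)

/-- Region equivalence `≡^K`. -/
def RegEq (K : ℕ) (x y : ℝ≥0) : Prop :=
  (⌊x⌋₊ = ⌊y⌋₊ ∧ (fracPart x = 0 ↔ fracPart y = 0)) ∨ ((K : ℝ≥0) < x ∧ (K : ℝ≥0) < y)

/-- One step of the (greedy) clock evolution: reset whenever the value is an
integer between `0` and `K`. -/
noncomputable def resetStep (K : ℕ) (v : ℝ≥0) : ℝ≥0 :=
  if ∃ m : ℕ, m ≤ K ∧ v = (m : ℝ≥0) then 0 else v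

/-- Auxiliary function computing `c^K` with accumulator `v`. -/
noncomputable def cKAux (K : ℕ) : ℝ≥0 → Timestamp → ℝ≥0
  | v, [] => v
  | v, t :: d => cKAux K (resetStep K (v + t)) d

/-- `c^K(d)`: the sum of the delays after the last integral position of `d`. -/
noncomputable def cK (K : ℕ) (d : Timestamp) : ℝ≥0 := cKAux K 0 d

/-- `c^K` of a timed word is `c^K` of its timestamp. -/
noncomputable def cKW {A : Type} (K : ℕ) (w : TimedWord A) : ℝ≥0 :=
  cK K (w.map Prod.fst)

/-- `c^K_⊤` : `c^K` truncated at `K`. -/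
noncomputable def cKTop {A : Type} (K : ℕ) (w : TimedWord A) : WithTop ℝ≥0 :=
  if cKW K w ≤ (K : ℝ≥0) then ((cKW K w : ℝ≥0) : WithTop ℝ≥0) else ⊤

/-! ### Clock constraints and one-clock timed automata -/

/-- Clock constraints `φ ::= x < m | m < x | x = m | φ ∧ φ`. -/
inductive CC : Type where
  | lt : ℕ → CC
  | gt : ℕ → CC
  | eq : ℕ → CC
  | and : CC → CC → CC

/-- Satisfaction of a clock constraint by a clock value. -/
def CC.sat : CC → ℝ≥0 → Prop
  | .lt m, x => x < (m : ℝ≥0)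
  | .gt m, x => (m : ℝ≥0) < x
  | .eq m, x => x = (m : ℝ≥0)
  | .and φ ψ, x => φ.sat x ∧ ψ.sat x

/-- The largest constant appearing in a clock constraint. -/
def CC.maxConst : CC → ℕ
  | .lt m => m
  | .gt m => m
  | .eq m => m
  | .and φ ψ => max φ.maxConst ψ.maxConst

/-- A transition of a one-clock timed automaton; `reset = true` means the
clock is reset (the `r = 0` case). -/
structure TTrans (Q A : Type) where
  src : Q
  dst : Q
  lab : A
  guard : CC
  reset : Bool

/-- A one-clock timed automaton. -/
structure TA (A : Type) where
  Q : Type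
  init : Q
  final : Set Q
  trans : Set (TTrans Q A)

/-- The automaton has finitely many states and transitions. -/
def TA.IsFinite {A : Type} (M : TA A) : Prop := Finite M.Q ∧ M.trans.Finite

/-- Runs of a one-clock timed automaton between configurations. -/
inductive Steps {A : Type} (M : TA A) : M.Q × ℝ≥0 → TimedWord A → M.Q × ℝ≥0 → Prop
  | nil (c : M.Q × ℝ≥0) : Steps M c [] c
  | cons {q : M.Q} {ν t : ℝ≥0} {a : A} {w : TimedWord A} {c : M.Q × ℝ≥0}
      (θ : TTrans M.Q A) (hθ : θ ∈ M.trans) (hsrc : θ.src = q) (hlab : θ.lab = a)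
      (hg : θ.guard.sat (ν + t))
      (hrest : Steps M (θ.dst, if θ.reset then 0 else ν + t) w c) :
      Steps M (q, ν) ((t, a) :: w) c

/-- The language of `M` from a given configuration. -/
def TA.LangFrom {A : Type} (M : TA A) (c : M.Q × ℝ≥0) : Set (TimedWord A) :=
  {w | ∃ q' : M.Q, ∃ ν' : ℝ≥0, Steps M c w (q', ν') ∧ q' ∈ M.final}

/-- The language of `M` (from the initial configuration). -/
def TA.Lang {A : Type} (M : TA A) : Set (TimedWord A) := M.LangFrom (M.init, 0)

/-- Determinism: distinct transitions with the same source and letter have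
disjoint guards. -/
def TA.Deterministic {A : Type} (M : TA A) : Prop :=
  ∀ θ₁ ∈ M.trans, ∀ θ₂ ∈ M.trans, θ₁ ≠ θ₂ → θ₁.src = θ₂.src → θ₁.lab = θ₂.lab →
    ∀ x : ℝ≥0, ¬ (θ₁.guard.sat x ∧ θ₂.guard.sat x)

/-- Completeness: every timed word admits a run from the initial configuration. -/
def TA.Complete {A : Type} (M : TA A) : Prop :=
  ∀ w : TimedWord A, ∃ c : M.Q × ℝ≥0, Steps M (M.init, 0) w c

/-- A 1-IRTA: every resetting transition has an equality guard. -/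
def TA.IsIRTA {A : Type} (M : TA A) : Prop :=
  ∀ θ ∈ M.trans, θ.reset = true → ∃ m : ℕ, θ.guard = CC.eq m

/-- Guards allowed in a strict 1-IRTA with constant `K`. -/
def StrictGuard (K : ℕ) (φ : CC) : Prop :=
  (∃ m : ℕ, φ = CC.eq m) ∨ (∃ m : ℕ, φ = CC.and (CC.gt m) (CC.lt (m + 1))) ∨ φ = CC.gt K

/-- Strictness with constant `K`: every guard is of one of the allowed forms
and a guard is an equality iff the transition resets. -/
def TA.IsStrict {A : Type} (M : TA A) (K : ℕ) : Prop :=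
  ∀ θ ∈ M.trans, StrictGuard K θ.guard ∧ ((∃ m : ℕ, θ.guard = CC.eq m) ↔ θ.reset = true)

/-- All constants appearing in guards are at most `K`. -/
def TA.MaxConstLE {A : Type} (M : TA A) (K : ℕ) : Prop :=
  ∀ θ ∈ M.trans, θ.guard.maxConst ≤ K

/-- `M` reaches the same control state on reading `u` and `v` from the initial
configuration. -/
def TA.SameState {A : Type} (M : TA A) (u v : TimedWord A) : Prop :=
  ∃ q : M.Q, ∃ ν ν' : ℝ≥0, Steps M (M.init, 0) u (q, ν) ∧ Steps M (M.init, 0) v (q, ν')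

/-- A `K`-acceptor. -/
def IsKAcceptor {A : Type} (M : TA A) (K : ℕ) : Prop :=
  M.IsFinite ∧ M.Complete ∧ M.Deterministic ∧ M.IsIRTA ∧ M.IsStrict K ∧ M.MaxConstLE K ∧
    ∀ u v : TimedWord A, M.SameState u v → RegEq K (cKW K u) (cKW K v)

/-! ### Equivalences on timed words -/

/-- `L`-preservation of a relation on timed words. -/
def LPreserving {A : Type} (L : Set (TimedWord A)) (r : TimedWord A → TimedWord A → Prop) :
    Prop :=
  ∀ u v : TimedWord A, r u v → (u ∈ L ↔ v ∈ L)

/-- `K`-monotonicity of a relation on timed words. -/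
def KMonotonic {A : Type} (K : ℕ) (r : TimedWord A → TimedWord A → Prop) : Prop :=
  ∀ u v : TimedWord A, r u v →
    RegEq K (cKW K u) (cKW K v) ∧
      ∀ (a : A) (t t' : ℝ≥0), RegEq K (cKW K u + t) (cKW K v + t') →
        r (u ++ [(t, a)]) (v ++ [(t', a)])

/-- Finite index: there are finitely many classes `{v | r u v}`. -/
def FiniteIndex {A : Type} (r : TimedWord A → TimedWord A → Prop) : Prop :=
  Set.Finite (Set.range fun u : TimedWord A => {v : TimedWord A | r u v})

/-! ### The rescaling maps -/

/-- The bijection `f_{λ→λ'}` of the open unit interval. -/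
noncomputable def fScale (lam lam' t : ℝ≥0) : ℝ≥0 :=
  if t ≤ lam then (lam' / lam) * t else lam' + ((1 - lam') / (1 - lam)) * (t - lam)

/-- The new delay `t'` computed from the current clock values `y, y'` and delay `t`. -/
noncomputable def tauStep (K : ℕ) (y y' t : ℝ≥0) : ℝ≥0 :=
  if (IsNatVal y ∧ IsNatVal y') ∨ ((K : ℝ≥0) < y ∧ (K : ℝ≥0) < y') then t
  else (⌊t⌋₊ : ℝ≥0) + fScale (1 - fracPart y) (1 - fracPart y') (fracPart t)

/-- Auxiliary rescaling map on timestamps, carrying the current clock values. -/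
noncomputable def tauAux (K : ℕ) : ℝ≥0 → ℝ≥0 → Timestamp → Timestamp
  | _, _, [] => []
  | y, y', t :: d =>
      tauStep K y y' t ::
        tauAux K (resetStep K (y + t)) (resetStep K (y' + tauStep K y y' t)) d

/-- The rescaling map `τ_{x→x'}` on timestamps. -/
noncomputable def tau (K : ℕ) (x x' : ℝ≥0) (d : Timestamp) : Timestamp :=
  tauAux K (resetStep K x) (resetStep K x') d

/-- Auxiliary rescaling map on timed words. -/
noncomputable def tauWAux {A : Type} (K : ℕ) : ℝ≥0 → ℝ≥0 → TimedWord A → TimedWord A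
  | _, _, [] => []
  | y, y', (t, a) :: w =>
      (tauStep K y y' t, a) ::
        tauWAux K (resetStep K (y + t)) (resetStep K (y' + tauStep K y y' t)) w

/-- The rescaling map `τ_{x→x'}` on timed words. -/
noncomputable def tauW {A : Type} (K : ℕ) (x x' : ℝ≥0) (w : TimedWord A) : TimedWord A :=
  tauWAux K (resetStep K x) (resetStep K x') w

/-! ### Residuals and the syntactic equivalence -/

/-- The residual language `u^{-1}L`. -/
def residual {A : Type} (L : Set (TimedWord A)) (u : TimedWord A) : Set (TimedWord A) :=
  {w : TimedWord A | u ++ w ∈ L}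

/-- The syntactic equivalence `≈^{L,K}`. -/
def ApproxLK {A : Type} (L : Set (TimedWord A)) (K : ℕ) (u v : TimedWord A) : Prop :=
  RegEq K (cKW K u) (cKW K v) ∧
    (tauW K (cKW K u) (cKW K v)) '' (residual L u) = residual L v

/-! ### The automaton built from a monotonic equivalence -/

/-- The region guard `φ([t])`. -/
noncomputable def phiOf (K : ℕ) (t : ℝ≥0) : CC :=
  if t ≤ (K : ℝ≥0) then
    (if IsNatVal t then CC.eq ⌊t⌋₊ else CC.and (CC.gt ⌊t⌋₊) (CC.lt (⌊t⌋₊ + 1)))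
  else CC.gt K

/-- The automaton `A_≈` built from an equivalence `s` on timed words. -/
noncomputable def Aapprox {A : Type} (L : Set (TimedWord A)) (K : ℕ)
    (s : Setoid (TimedWord A)) : TA A where
  Q := Quotient s
  init := Quotient.mk s ([] : TimedWord A)
  final := {q : Quotient s | ∃ u : TimedWord A, q = Quotient.mk s u ∧ u ∈ L}
  trans := {θ : TTrans (Quotient s) A |
    ∃ (u : TimedWord A) (a : A) (t : ℝ≥0),
      θ.src = Quotient.mk s u ∧ θ.dst = Quotient.mk s (u ++ [(t, a)]) ∧ θ.lab = a ∧
      θ.guard = phiOf K (cKW K u + t) ∧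
      (θ.reset = true ↔ ∃ m : ℕ, m ≤ K ∧ cKW K u + t = (m : ℝ≥0))}

/-! ### Half-integral and small words -/

/-- Every delay has fractional part `0` or `1/2`. -/
def HalfIntegral {A : Type} (w : TimedWord A) : Prop :=
  ∀ p ∈ w, fracPart p.1 = 0 ∨ fracPart p.1 = 1 / 2

/-- Every delay is `< K + 1`. -/
def SmallWord {A : Type} (K : ℕ) (w : TimedWord A) : Prop :=
  ∀ p ∈ w, p.1 < (K : ℝ≥0) + 1

/-- The delays of `Σ_K`: half-integral values `≤ K + 1/2`. -/
def IsSigmaK (K : ℕ) (t : ℝ≥0) : Prop :=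
  (fracPart t = 0 ∨ fracPart t = 1 / 2) ∧ t ≤ (K : ℝ≥0) + 1 / 2

/-- Words over `Σ_K` (small half-integral words). -/
def SigmaWord {A : Type} (K : ℕ) (w : TimedWord A) : Prop :=
  ∀ p ∈ w, IsSigmaK K p.1



/-! ### `K`-acceptors with their region representatives -/

/-- A `K`-acceptor bundled with the half-integral representative of the
unique region of each state. -/
structure KAcc (A : Type) (K : ℕ) where
  M : TA A
  acc : IsKAcceptor M K
  reg : M.Q → ℝ≥0
  regHalf : ∀ q : M.Q, fracPart (reg q) = 0 ∨ fracPart (reg q) = 1 / 2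
  regLe : ∀ q : M.Q, reg q ≤ (K : ℝ≥0) + 1 / 2
  regSpec : ∀ (w : TimedWord A) (q : M.Q) (x : ℝ≥0),
    Steps M (M.init, 0) w (q, x) → RegEq K x (reg q)

/-- The minimization equivalences `∼^i` on the states of a `K`-acceptor. -/
def simEq {A : Type} {K : ℕ} (B : KAcc A K) : ℕ → B.M.Q → B.M.Q → Prop
  | 0, p, q => B.reg p = B.reg q ∧ (p ∈ B.M.final ↔ q ∈ B.M.final)
  | i + 1, p, q => simEq B i p q ∧
      ∀ (t : ℝ≥0) (a : A), IsSigmaK K t →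
        ∀ θ₁ θ₂ : TTrans B.M.Q A, θ₁ ∈ B.M.trans → θ₂ ∈ B.M.trans →
          θ₁.src = p → θ₂.src = q → θ₁.lab = a → θ₂.lab = a →
          θ₁.guard = phiOf K t → θ₂.guard = phiOf K t →
          simEq B i θ₁.dst θ₂.dst

/-- The quotient automaton `B/∼^m`. -/
noncomputable def quotTA {A : Type} {K : ℕ} (B : KAcc A K) (m : ℕ) : TA A where
  Q := Quot (simEq B m)
  init := Quot.mk (simEq B m) B.M.init
  final := {c : Quot (simEq B m) | ∃ q ∈ B.M.final, c = Quot.mk (simEq B m) q}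
  trans := {θ : TTrans (Quot (simEq B m)) A |
    ∃ θ₀ ∈ B.M.trans,
      θ.src = Quot.mk (simEq B m) θ₀.src ∧ θ.dst = Quot.mk (simEq B m) θ₀.dst ∧
      θ.lab = θ₀.lab ∧ θ.guard = θ₀.guard ∧ θ.reset = θ₀.reset}

/-! ### Observation tables -/

/-- An observation table over `Σ_K`. -/
structure ObsTable (A : Type) (K : ℕ) where
  U1 : Set (TimedWord A)
  E : Set (TimedWord A)
  val : TimedWord A → TimedWord A → Bool
  U1fin : U1.Finite
  Efin : E.Finite
  U1sigma : ∀ u ∈ U1, SigmaWord K u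
  Esigma : ∀ e ∈ E, SigmaWord K e
  epsU1 : ([] : TimedWord A) ∈ U1
  prefixClosed : ∀ (u : TimedWord A) (x : ℝ≥0 × A), u ++ [x] ∈ U1 → u ∈ U1
  epsE : ([] : TimedWord A) ∈ E
  suffixClosed : ∀ (x : ℝ≥0 × A) (e : TimedWord A), x :: e ∈ E → e ∈ E

/-- The set `U2` of one-letter `Σ_K`-extensions of `U1`. -/
def obsU2 {A : Type} {K : ℕ} (T : ObsTable A K) : Set (TimedWord A) :=
  {w : TimedWord A | ∃ u ∈ T.U1, ∃ (t : ℝ≥0) (a : A), IsSigmaK K t ∧ w = u ++ [(t, a)]}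

/-- `R(u)`: the row of `u` (restricted to `E`) together with `c^K_⊤(u)`. -/
noncomputable def Rof {A : Type} {K : ℕ} (T : ObsTable A K) (u : TimedWord A) :
    ({e : TimedWord A // e ∈ T.E} → Bool) × WithTop ℝ≥0 :=
  (fun e => T.val u e.1, cKTop K u)

/-- The table is closed. -/
def ObsTable.Closed {A : Type} {K : ℕ} (T : ObsTable A K) : Prop :=
  ∀ w ∈ obsU2 T, ∃ u ∈ T.U1, Rof T w = Rof T u

/-- The table is consistent. -/
def ObsTable.Consistent {A : Type} {K : ℕ} (T : ObsTable A K) : Prop :=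
  ∀ u ∈ T.U1, ∀ w ∈ T.U1, Rof T u = Rof T w →
    ∀ (t : ℝ≥0) (a : A), IsSigmaK K t → Rof T (u ++ [(t, a)]) = Rof T (w ++ [(t, a)])

/-- The automaton `A_𝒯` induced by a (closed and consistent) observation table. -/
noncomputable def ATable {A : Type} {K : ℕ} (T : ObsTable A K) : TA A where
  Q := {f : ({e : TimedWord A // e ∈ T.E} → Bool) × WithTop ℝ≥0 // ∃ u ∈ T.U1, f = Rof T u}
  init := ⟨Rof T [], ⟨[], T.epsU1, rfl⟩⟩
  final := {q | ∃ u ∈ T.U1, q.1 = Rof T u ∧ T.val u [] = true}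
  trans := {θ | ∃ u ∈ T.U1, ∃ (t : ℝ≥0) (a : A), IsSigmaK K t ∧
      θ.src.1 = Rof T u ∧ θ.dst.1 = Rof T (u ++ [(t, a)]) ∧ θ.lab = a ∧
      θ.guard = phiOf K (cKW K u + t) ∧
      (θ.reset = true ↔ ∃ m : ℕ, m ≤ K ∧ cKW K u + t = (m : ℝ≥0))}

/-- A `K`-acceptor is consistent with the observation table `𝒯`. -/
def ConsistentWith {A : Type} {K : ℕ} (M : TA A) (T : ObsTable A K) : Prop :=
  ∀ w : TimedWord A, (w ∈ T.U1 ∨ w ∈ obsU2 T) → ∀ e ∈ T.E,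
    ∀ (q : M.Q) (ν : ℝ≥0), Steps M (M.init, 0) (w ++ e) (q, ν) →
      (q ∈ M.final ↔ T.val w e = true)

/-- Isomorphism of one-clock timed automata. -/
structure TAIso {A : Type} (M N : TA A) where
  toEquiv : M.Q ≃ N.Q
  init_eq : toEquiv M.init = N.init
  final_iff : ∀ q : M.Q, q ∈ M.final ↔ toEquiv q ∈ N.final
  trans_iff : ∀ θ : TTrans M.Q A,
    θ ∈ M.trans ↔
      (⟨toEquiv θ.src, toEquiv θ.dst, θ.lab, θ.guard, θ.reset⟩ : TTrans N.Q A) ∈ N.trans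


/-!
A strict 1-IRTA with constants at most `K` resets its clock exactly when the clock is an
integer `≤ K`, so after reading a word its clock is `c^K` of that word, and its guards cannot
tell region-equivalent clock values apart. Along the run on `u0 u`, replace each clock value
after `u0` by the half-integral representative of its region (the midpoint of its floor and
ceiling, or `K + 1/2` above `K`). The delays realising these representatives form a word `w`
of half-integers `≤ K + 1/2` that depends only on `u0`, `u` and `K`, and every `K`-acceptor
takes the same transitions on `u0 w` as on `u0 u`.
-/

lemma fracPart_eq_zero_iff_ceil_eq_floor {x : ℝ≥0} : fracPart x = 0 ↔ ⌈x⌉₊ = ⌊x⌋₊ := by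
  rw [fracPart, tsub_eq_zero_iff_le, ← Nat.ceil_le]
  exact ⟨fun h => le_antisymm h (Nat.floor_le_ceil x), fun h => h.le⟩

lemma regEq_iff {K : ℕ} {x y : ℝ≥0} :
    RegEq K x y ↔ (⌊x⌋₊ = ⌊y⌋₊ ∧ ⌈x⌉₊ = ⌈y⌉₊) ∨ ((K : ℝ≥0) < x ∧ (K : ℝ≥0) < y) := by
  have := Nat.floor_le_ceil x; have := Nat.floor_le_ceil y
  have := Nat.ceil_le_floor_add_one x; have := Nat.ceil_le_floor_add_one y
  rw [RegEq, fracPart_eq_zero_iff_ceil_eq_floor, fracPart_eq_zero_iff_ceil_eq_floor]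
  apply or_congr_left
  omega

lemma RegEq.refl (K : ℕ) (x : ℝ≥0) : RegEq K x x := Or.inl ⟨rfl, Iff.rfl⟩

lemma RegEq.symm {K : ℕ} {x y : ℝ≥0} (h : RegEq K x y) : RegEq K y x :=
  h.imp (fun h => ⟨h.1.symm, h.2.symm⟩) And.symm

lemma CC.sat_of_regEq {K : ℕ} {x y : ℝ≥0} (h : RegEq K x y) :
    ∀ {φ : CC}, φ.maxConst ≤ K → φ.sat x → φ.sat y
  | .lt m, hm, hx => by
    rcases regEq_iff.1 h with ⟨hfl, -⟩ | ⟨hKx, -⟩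
    · simp only [CC.sat] at hx ⊢
      rwa [← Nat.floor_lt zero_le, ← hfl, Nat.floor_lt zero_le]
    · exact absurd (hKx.trans hx) (by simpa [CC.maxConst] using hm)
  | .gt m, hm, hx => by
    rcases regEq_iff.1 h with ⟨-, hcl⟩ | ⟨-, hKy⟩
    · simp only [CC.sat] at hx ⊢
      rwa [← Nat.lt_ceil, ← hcl, Nat.lt_ceil]
    · exact lt_of_le_of_lt (by exact_mod_cast hm) hKy
  | .eq m, hm, hx => by
    rcases regEq_iff.1 h with ⟨hfl, hcl⟩ | ⟨hKx, -⟩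
    · simp only [CC.sat, le_antisymm_iff] at hx ⊢
      rwa [← Nat.ceil_le, ← Nat.le_floor_iff zero_le, ← hfl, ← hcl, Nat.ceil_le,
        Nat.le_floor_iff zero_le]
    · exact absurd (hx ▸ hKx) (by simpa [CC.maxConst] using hm)
  | .and φ ψ, hm, hx => ⟨CC.sat_of_regEq h (le_of_max_le_left hm) hx.1,
      CC.sat_of_regEq h (le_of_max_le_right hm) hx.2⟩

lemma regEq_resetStep {K : ℕ} {x y : ℝ≥0} (h : RegEq K x y) :
    RegEq K (resetStep K x) (resetStep K y) := by
  have hiff : (∃ m : ℕ, m ≤ K ∧ x = m) ↔ ∃ m : ℕ, m ≤ K ∧ y = m :=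
    ⟨fun ⟨m, hm, hx⟩ => ⟨m, hm, CC.sat_of_regEq (φ := .eq m) h hm hx⟩,
      fun ⟨m, hm, hy⟩ => ⟨m, hm, CC.sat_of_regEq (φ := .eq m) h.symm hm hy⟩⟩
  unfold resetStep
  split_ifs with hx hy hy
  exacts [RegEq.refl K 0, absurd (hiff.1 hx) hy, absurd (hiff.2 hy) hx, h]

def IsHalfInt (x : ℝ≥0) : Prop := ∃ n : ℕ, 2 * x = n

lemma isHalfInt_iff {x : ℝ≥0} : IsHalfInt x ↔ ∃ q : ℕ, x = q ∨ x = q + 1 / 2 := by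
  constructor
  · rintro ⟨n, hn⟩
    obtain ⟨q, rfl | rfl⟩ := Nat.even_or_odd' n
    · refine ⟨q, Or.inl ?_⟩
      ext; have := congrArg NNReal.toReal hn; push_cast at this ⊢; linarith
    · refine ⟨q, Or.inr ?_⟩
      ext; have := congrArg NNReal.toReal hn; push_cast at this ⊢; linarith
  · rintro ⟨q, rfl | rfl⟩
    · exact ⟨2 * q, by push_cast; ring⟩
    · exact ⟨2 * q + 1, by ext; push_cast; ring⟩

namespace IsHalfInt

lemma zero : IsHalfInt 0 := ⟨0, by simp⟩

lemma natCast (n : ℕ) : IsHalfInt n := ⟨2 * n, by push_cast; rfl⟩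

lemma add {x y : ℝ≥0} (hx : IsHalfInt x) (hy : IsHalfInt y) : IsHalfInt (x + y) := by
  obtain ⟨n, hn⟩ := hx; obtain ⟨m, hm⟩ := hy
  exact ⟨n + m, by rw [mul_add, hn, hm, Nat.cast_add]⟩

lemma tsub {x y : ℝ≥0} (hx : IsHalfInt x) (hy : IsHalfInt y) : IsHalfInt (x - y) := by
  obtain ⟨n, hn⟩ := hx; obtain ⟨m, hm⟩ := hy
  exact ⟨n - m, by rw [mul_tsub, hn, hm, Nat.cast_tsub]⟩

lemma resetStep {K : ℕ} {x : ℝ≥0} (hx : IsHalfInt x) : IsHalfInt (resetStep K x) := by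
  unfold IRTA.resetStep
  split_ifs
  exacts [zero, hx]

end IsHalfInt

lemma floor_natCast_add_half (q : ℕ) : ⌊(q : ℝ≥0) + 1 / 2⌋₊ = q :=
  (Nat.floor_eq_iff zero_le).2 ⟨le_self_add, by gcongr; norm_num⟩

lemma ceil_natCast_add_half (q : ℕ) : ⌈(q : ℝ≥0) + 1 / 2⌉₊ = q + 1 :=
  (Nat.ceil_eq_iff q.succ_ne_zero).2 ⟨by simp, by push_cast; gcongr; norm_num⟩

lemma isHalfInt_iff_fracPart {x : ℝ≥0} :
    IsHalfInt x ↔ fracPart x = 0 ∨ fracPart x = 1 / 2 := by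
  rw [isHalfInt_iff]
  constructor
  · rintro ⟨q, rfl | rfl⟩
    · simp [fracPart]
    · rw [fracPart, floor_natCast_add_half, add_tsub_cancel_left]
      exact Or.inr rfl
  · have hx : x = ⌊x⌋₊ + fracPart x := (add_tsub_cancel_of_le (Nat.floor_le zero_le)).symm
    rintro (h | h) <;> rw [h] at hx
    exacts [⟨⌊x⌋₊, Or.inl (by simpa using hx)⟩, ⟨⌊x⌋₊, Or.inr hx⟩]

lemma IsHalfInt.two_mul_eq_floor_add_ceil {x : ℝ≥0} (hx : IsHalfInt x) :
    2 * x = ⌊x⌋₊ + ⌈x⌉₊ := by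
  obtain ⟨q, rfl | rfl⟩ := isHalfInt_iff.1 hx
  · simp [two_mul]
  · rw [floor_natCast_add_half, ceil_natCast_add_half]
    ext; push_cast; ring

lemma isHalfInt_cKAux (K : ℕ) {d : Timestamp} (hd : ∀ t ∈ d, IsHalfInt t) {v : ℝ≥0}
    (hv : IsHalfInt v) : IsHalfInt (cKAux K v d) := by
  induction d generalizing v with
  | nil => exact hv
  | cons t d ih =>
    rw [List.forall_mem_cons] at hd
    exact ih hd.2 (hv.add hd.1).resetStep

lemma HalfIntegral.isHalfInt_cKW {A : Type} (K : ℕ) {w : TimedWord A} (h : HalfIntegral w) :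
    IsHalfInt (cKW K w) :=
  isHalfInt_cKAux K (List.forall_mem_map.2 fun p hp => isHalfInt_iff_fracPart.2 (h p hp))
    IsHalfInt.zero

/-- The half-integral representative of the region of `v`. -/
noncomputable def rep (K : ℕ) (v : ℝ≥0) : ℝ≥0 :=
  if v ≤ K then (⌊v⌋₊ + ⌈v⌉₊ : ℝ≥0) / 2 else K + 1 / 2

lemma isHalfInt_rep (K : ℕ) (v : ℝ≥0) : IsHalfInt (rep K v) := by
  unfold rep
  split_ifs
  · exact ⟨⌊v⌋₊ + ⌈v⌉₊, by ext; push_cast; ring⟩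
  · exact ⟨2 * K + 1, by ext; push_cast; ring⟩

lemma rep_le (K : ℕ) (v : ℝ≥0) : rep K v ≤ K + 1 / 2 := by
  unfold rep
  split_ifs with hv
  · have hfl : (⌊v⌋₊ : ℝ≥0) ≤ K := (Nat.floor_le zero_le).trans hv
    have hcl : (⌈v⌉₊ : ℝ≥0) ≤ K := by exact_mod_cast Nat.ceil_le.2 hv
    rw [← NNReal.coe_le_coe] at hfl hcl ⊢
    push_cast at hfl hcl ⊢
    linarith
  · exact le_rfl

lemma regEq_rep (K : ℕ) (v : ℝ≥0) : RegEq K v (rep K v) := by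
  unfold rep
  split_ifs with hv
  · refine regEq_iff.2 (Or.inl ?_)
    obtain hcl | hcl : ⌈v⌉₊ = ⌊v⌋₊ ∨ ⌈v⌉₊ = ⌊v⌋₊ + 1 := by
      have := Nat.floor_le_ceil v; have := Nat.ceil_le_floor_add_one v; omega
    · rw [hcl, add_self_div_two, Nat.floor_natCast, Nat.ceil_natCast]
      exact ⟨rfl, rfl⟩
    · have hmid : (⌊v⌋₊ + ⌈v⌉₊ : ℝ≥0) / 2 = ⌊v⌋₊ + 1 / 2 := by
        rw [hcl]; ext; push_cast; ring
      rw [hmid, floor_natCast_add_half, ceil_natCast_add_half, hcl]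
      exact ⟨rfl, rfl⟩
  · exact Or.inr ⟨not_le.1 hv, lt_add_of_pos_right _ (by norm_num)⟩

lemma rep_eq_of_regEq {K : ℕ} {ν ν' : ℝ≥0} (hν : ν ≤ K) (h : RegEq K ν ν')
    (hν' : IsHalfInt ν') : ν' = rep K ν := by
  rcases regEq_iff.1 h with ⟨hfl, hcl⟩ | ⟨hK, -⟩
  · rw [rep, if_pos hν, hfl, hcl, ← hν'.two_mul_eq_floor_add_ceil]
    ext; push_cast; ring
  · exact absurd hν (not_le.2 hK)

lemma rep_mono {K : ℕ} {v w : ℝ≥0} (hvw : v ≤ w) (hw : w ≤ K) : rep K v ≤ rep K w := by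
  rw [rep, rep, if_pos (hvw.trans hw), if_pos hw]
  gcongr

/-- Below `K` the truncated subtraction is harmless: there `ν' = rep K ν ≤ rep K (ν + t)`. -/
lemma regEq_add_rep_tsub {K : ℕ} {ν ν' : ℝ≥0} (h : RegEq K ν ν') (hν' : IsHalfInt ν')
    (t : ℝ≥0) : RegEq K (ν + t) (ν' + (rep K (ν + t) - ν')) := by
  by_cases hle : ν + t ≤ K
  · have hrep : ν' = rep K ν := rep_eq_of_regEq (le_self_add.trans hle) h hν'
    rw [add_tsub_cancel_of_le (hrep ▸ rep_mono le_self_add hle)]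
    exact regEq_rep K (ν + t)
  · refine Or.inr ⟨not_le.1 hle, ?_⟩
    rw [rep, if_neg hle]
    exact (lt_add_of_pos_right _ (by norm_num)).trans_le le_add_tsub

section Runs

variable {A : Type} {M : TA A}

lemma Steps.append {x y : TimedWord A} {c c' c'' : M.Q × ℝ≥0} (h₁ : Steps M c x c')
    (h₂ : Steps M c' y c'') : Steps M c (x ++ y) c'' := by
  induction h₁ with
  | nil => exact h₂
  | cons θ hθ hsrc hlab hg _ ih => exact .cons θ hθ hsrc hlab hg (ih h₂)

lemma Steps.exists_of_append {x y : TimedWord A} {c c'' : M.Q × ℝ≥0}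
    (h : Steps M c (x ++ y) c'') : ∃ c', Steps M c x c' ∧ Steps M c' y c'' := by
  induction x generalizing c with
  | nil => exact ⟨c, .nil c, h⟩
  | cons p x ih =>
    cases h with
    | cons θ hθ hsrc hlab hg hrest =>
      obtain ⟨c', h₁, h₂⟩ := ih hrest
      exact ⟨c', .cons θ hθ hsrc hlab hg h₁, h₂⟩

variable {K : ℕ}

lemma TA.IsStrict.reset_eq_true_iff (hst : M.IsStrict K) (hmx : M.MaxConstLE K)
    {θ : TTrans M.Q A} (hθ : θ ∈ M.trans) {v : ℝ≥0} (hv : θ.guard.sat v) :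
    θ.reset = true ↔ ∃ m : ℕ, m ≤ K ∧ v = m := by
  obtain ⟨hguard, hreset⟩ := hst θ hθ
  rw [← hreset]
  constructor
  · rintro ⟨m, hm⟩
    have hmK := hmx θ hθ
    rw [hm] at hv hmK
    exact ⟨m, hmK, hv⟩
  · rintro ⟨m, hmK, rfl⟩
    rcases hguard with hm | ⟨m', hm'⟩ | hK
    · exact hm
    · rw [hm'] at hv
      simp only [CC.sat, Nat.cast_lt] at hv
      obtain ⟨h₁, h₂⟩ := hv
      exact absurd (Nat.lt_succ_iff.1 (by exact_mod_cast h₂)) (not_le.2 h₁)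
    · rw [hK] at hv
      exact absurd (show K < m by simpa [CC.sat] using hv) (not_lt.2 hmK)

lemma TA.IsStrict.ite_reset_eq_resetStep (hst : M.IsStrict K) (hmx : M.MaxConstLE K)
    {θ : TTrans M.Q A} (hθ : θ ∈ M.trans) {v : ℝ≥0} (hv : θ.guard.sat v) :
    (if θ.reset then 0 else v) = resetStep K v :=
  if_congr (hst.reset_eq_true_iff hmx hθ hv) rfl rfl

lemma Steps.clock_eq_cKAux (hst : M.IsStrict K) (hmx : M.MaxConstLE K)
    {u : TimedWord A} {q : M.Q} {ν : ℝ≥0} {c : M.Q × ℝ≥0} (h : Steps M (q, ν) u c) :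
    c.2 = cKAux K ν (u.map Prod.fst) := by
  induction u generalizing q ν with
  | nil => cases h; rfl
  | cons p u ih =>
    cases h with
    | cons θ hθ _ _ hg hrest =>
      rw [hst.ite_reset_eq_resetStep hmx hθ hg] at hrest
      exact ih hrest

end Runs

lemma SigmaWord.halfIntegral {A : Type} {K : ℕ} {w : TimedWord A} (h : SigmaWord K w) :
    HalfIntegral w :=
  fun p hp => (h p hp).1

lemma SigmaWord.smallWord {A : Type} {K : ℕ} {w : TimedWord A} (h : SigmaWord K w) :
    SmallWord K w :=
  fun p hp => (h p hp).2.trans_lt (by gcongr; norm_num)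

/-- Read `u` from clock `ν` while a shadow clock, starting at `ν'`, is advanced to
`rep K (ν + t)` at each letter; the shadow delays form the new word. -/
noncomputable def repWord {A : Type} (K : ℕ) : ℝ≥0 → ℝ≥0 → TimedWord A → TimedWord A
  | _, _, [] => []
  | ν, ν', (t, a) :: u =>
      (rep K (ν + t) - ν', a) ::
        repWord K (resetStep K (ν + t)) (resetStep K (ν' + (rep K (ν + t) - ν'))) u

lemma sigmaWord_repWord {A : Type} (K : ℕ) (u : TimedWord A) {ν ν' : ℝ≥0}
    (hν' : IsHalfInt ν') : SigmaWord K (repWord K ν ν' u) := by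
  induction u generalizing ν ν' with
  | nil => simp [repWord, SigmaWord]
  | cons p u ih =>
    obtain ⟨t, a⟩ := p
    have ht : IsHalfInt (rep K (ν + t) - ν') := (isHalfInt_rep K _).tsub hν'
    exact List.forall_mem_cons.2 ⟨⟨isHalfInt_iff_fracPart.1 ht,
      tsub_le_self.trans (rep_le K _)⟩, ih (hν'.add ht).resetStep⟩

/-- Guards and resets only see the region of the clock, so the same transitions fire. -/
lemma Steps.repWord {A : Type} {M : TA A} {K : ℕ} (hst : M.IsStrict K) (hmx : M.MaxConstLE K)
    {u : TimedWord A} {q : M.Q} {ν ν' : ℝ≥0} {c : M.Q × ℝ≥0} (h : Steps M (q, ν) u c)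
    (hreg : RegEq K ν ν') (hν' : IsHalfInt ν') :
    ∃ ν'', Steps M (q, ν') (repWord K ν ν' u) (c.1, ν'') := by
  induction u generalizing q ν ν' with
  | nil => cases h; exact ⟨ν', .nil _⟩
  | cons p u ih =>
    obtain ⟨t, a⟩ := p
    cases h with
    | cons θ hθ hsrc hlab hg hrest =>
      have hreg' := regEq_add_rep_tsub hreg hν' t
      have hg' := CC.sat_of_regEq hreg' (hmx θ hθ) hg
      rw [hst.ite_reset_eq_resetStep hmx hθ hg] at hrest
      obtain ⟨ν'', hrun⟩ := ih hrest (regEq_resetStep hreg')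
        (hν'.add ((isHalfInt_rep K _).tsub hν')).resetStep
      refine ⟨ν'', .cons θ hθ hsrc hlab hg' ?_⟩
      rwa [hst.ite_reset_eq_resetStep hmx hθ hg']

theorem statement14_general {A : Type} (K : ℕ) (u0 : TimedWord A)
    (h0 : HalfIntegral u0) (hs : SmallWord K u0) :
    ∀ u : TimedWord A, ∃ w : TimedWord A, HalfIntegral w ∧
      HalfIntegral (u0 ++ w) ∧ SmallWord K (u0 ++ w) ∧
      ∀ B : TA A, IsKAcceptor B K → B.SameState (u0 ++ u) (u0 ++ w) := by
  intro u
  have hν₀ : IsHalfInt (cKW K u0) := h0.isHalfInt_cKW K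
  have hw : SigmaWord K (repWord K (cKW K u0) (cKW K u0) u) := sigmaWord_repWord K u hν₀
  refine ⟨_, hw.halfIntegral, List.forall_mem_append.2 ⟨h0, hw.halfIntegral⟩,
    List.forall_mem_append.2 ⟨hs, hw.smallWord⟩, ?_⟩
  rintro B ⟨-, hcomplete, -, -, hst, hmx, -⟩
  obtain ⟨⟨q, ν⟩, hrun⟩ := hcomplete (u0 ++ u)
  obtain ⟨⟨q₀, ν₀⟩, hrun₀, hrun₁⟩ := hrun.exists_of_append
  obtain rfl : ν₀ = cKW K u0 := hrun₀.clock_eq_cKAux hst hmx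
  obtain ⟨ν', hrun'⟩ := hrun₁.repWord hst hmx (RegEq.refl K _) hν₀
  exact ⟨q, ν, ν', hrun, hrun₀.append hrun'⟩

/-- every timed word `u` can be replaced after a small half-integral
prefix `u0` by a half-integral `w` with `u0w` small, reaching the same state in
every `K`-acceptor. -/
theorem statement14 {A : Type} [Finite A] (K : ℕ) (u0 : TimedWord A)
    (h0 : HalfIntegral u0) (hs : SmallWord K u0) :
    ∀ u : TimedWord A, ∃ w : TimedWord A, HalfIntegral w ∧
      HalfIntegral (u0 ++ w) ∧ SmallWord K (u0 ++ w) ∧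
      ∀ B : TA A, IsKAcceptor B K → B.SameState (u0 ++ u) (u0 ++ w) :=
  statement14_general K u0 h0 hs

end IRTA
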